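/- Let p be a prime, let β₂ be an odd positive integer and β₃ ≥ β₂ an integer; set m = (β₂−1)/2 and η = (−1)^{β₃+1} (i.e. η = 1 if β₃ is odd, η = −1 if β₃ is even). Define F(X) = Σ_{i=0}^{1} Σ_{j=0}^{m−i} p^{i+j} X^{i+2j} + η·Σ_{i=0}^{1} Σ_{j=0}^{m−i} p^{m−j} X^{β₃+2+i+2j} + p^{m+1} Σ_{i=0}^{1} Σ_{j=0}^{β₃−β₂} (−1)^{j} X^{β₂+i+j}. Then F(−1) = 0 and F′(−1) = β₂ + β₃ + 3 − (β₃ − β₂ + 1)·p^{m+1} − 2·(p^{m+1} − 1)/(p − 1). -/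
import Mathlib


open Polynomial Finset


lemma ev_sum (a : ℕ → ℚ) (e : ℕ → ℕ) (n : ℕ) :
    (∑ j ∈ range n, C (a j) * X ^ (e j)).eval (-1) =
      ∑ j ∈ range n, a j * (-1) ^ (e j) := by
  rw [eval_finset_sum]; simp

lemma dev_sum (a : ℕ → ℚ) (e : ℕ → ℕ) (n : ℕ) :
    (Polynomial.derivative (∑ j ∈ range n, C (a j) * X ^ (e j))).eval (-1) =
      ∑ j ∈ range n, -(a j * (e j : ℚ) * (-1) ^ (e j)) := by
  rw [derivative_sum]
  simp only [derivative_C_mul_X_pow]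
  rw [eval_finset_sum]
  refine Finset.sum_congr rfl fun j _ => ?_
  rcases e j with _ | k
  · simp
  · simp [pow_succ]

lemma sum_range_two' {M : Type*} [AddCommMonoid M] (f : ℕ → M) :
    ∑ i ∈ range 2, f i = f 0 + f 1 := by
  rw [Finset.sum_range_succ, Finset.sum_range_one]

lemma geom_aux (q : ℚ) (m : ℕ) :
    ∑ j ∈ range m, q ^ (1 + j) = (∑ j ∈ range (m + 1), q ^ j) - 1 := by
  rw [Finset.sum_range_succ']
  simp [add_comm]

lemma lemD1 (q : ℚ) (m : ℕ) :
    ∑ j ∈ range m, (1 + 2 * (j : ℚ)) * q ^ (1 + j)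
      - ∑ j ∈ range (m + 1), 2 * (j : ℚ) * q ^ j
      = 1 - ∑ j ∈ range (m + 1), q ^ j := by
  induction m with
  | zero => simp
  | succ m ih =>
    rw [Finset.sum_range_succ (n := m), Finset.sum_range_succ (n := m + 1),
        Finset.sum_range_succ (f := fun j => q ^ j)]
    push_cast
    linear_combination ih

lemma lemD2 (q : ℚ) (m : ℕ) (c : ℚ) :
    ∑ j ∈ range (m + 1), q ^ (m - j) * (c + 2 * (j : ℚ))
      - ∑ j ∈ range m, q ^ (m - j) * (c + 1 + 2 * (j : ℚ))
      = c + 2 * m + 1 - ∑ j ∈ range (m + 1), q ^ j := by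
  induction m generalizing c with
  | zero => simp
  | succ m ih =>
    have h1 : ∑ j ∈ range (m + 2), q ^ (m + 1 - j) * (c + 2 * (j : ℚ))
        = ∑ j ∈ range (m + 1), q ^ (m - j) * ((c + 2) + 2 * (j : ℚ)) + q ^ (m + 1) * c := by
      rw [Finset.sum_range_succ']
      congr 1
      · refine Finset.sum_congr rfl fun j _ => ?_
        rw [Nat.add_sub_add_right]
        push_cast
        ring
      · norm_num
    have h2 : ∑ j ∈ range (m + 1), q ^ (m + 1 - j) * (c + 1 + 2 * (j : ℚ))
        = ∑ j ∈ range m, q ^ (m - j) * ((c + 2) + 1 + 2 * (j : ℚ)) + q ^ (m + 1) * (c + 1) := by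
      rw [Finset.sum_range_succ']
      congr 1
      · refine Finset.sum_congr rfl fun j _ => ?_
        rw [Nat.add_sub_add_right]
        push_cast
        ring
      · norm_num
    rw [h1, h2, Finset.sum_range_succ (f := fun j => q ^ j) (n := m + 1)]
    push_cast
    linear_combination ih (c + 2)

lemma lemE2 (q : ℚ) (m : ℕ) :
    ∑ j ∈ range (m + 1), q ^ (m - j) - ∑ j ∈ range m, q ^ (m - j) = 1 := by
  rw [Finset.sum_range_succ]
  simp


/-- Evaluation of Katsurada's polynomial in the case `β₂` odd, `ξ = −1`, `σ = 2`,
`η = (−1)^{β₃+1}`: `F(−1) = 0` and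
`F′(−1) = β₂ + β₃ + 3 − (β₃−β₂+1)p^{m+1} − 2(p^{m+1}−1)/(p−1)`, `m = (β₂−1)/2`. -/
theorem stmt_14 (p : ℕ) (hp : p.Prime) (β₂ β₃ m : ℕ)
    (hβ₂ : 0 < β₂) (hβ₂odd : Odd β₂) (hle : β₂ ≤ β₃)
    (hm : β₂ = 2 * m + 1)
    (η : ℚ) (hη : η = (-1 : ℚ) ^ (β₃ + 1))
    (F : Polynomial ℚ)
    (hF : F =
      (∑ i ∈ range 2, ∑ j ∈ range (m + 1 - i),
        C ((p : ℚ) ^ (i + j)) * X ^ (i + 2 * j)) +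
      C η * (∑ i ∈ range 2, ∑ j ∈ range (m + 1 - i),
        C ((p : ℚ) ^ (m - j)) * X ^ (β₃ + 2 + i + 2 * j)) +
      C ((p : ℚ) ^ (m + 1)) *
        ∑ i ∈ range 2, ∑ j ∈ range (β₃ - β₂ + 1), C ((-1 : ℚ) ^ j) * X ^ (β₂ + i + j)) :
    F.eval (-1) = 0 ∧
    (derivative F).eval (-1) =
      (β₂ : ℚ) + β₃ + 3 - ((β₃ : ℚ) - β₂ + 1) * (p : ℚ) ^ (m + 1)
        - 2 * ((p : ℚ) ^ (m + 1) - 1) / ((p : ℚ) - 1) := by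
  subst hm hη hF
  have hq1 : (p : ℚ) ≠ 1 := by exact_mod_cast hp.one_lt.ne'
  have he : (-1 : ℚ) ^ β₃ * (-1) ^ β₃ = 1 := by
    rw [← pow_add]
    exact Even.neg_one_pow ⟨β₃, rfl⟩
  have hK : ((β₃ - (2 * m + 1) + 1 : ℕ) : ℚ) = (β₃ : ℚ) - (2 * (m : ℚ) + 1) + 1 := by
    push_cast [Nat.cast_sub hle]
    ring
  simp only [sum_range_two', Nat.sub_zero, Nat.add_sub_cancel] at *
  constructor
  · simp only [eval_add, eval_mul, eval_C, ev_sum]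
    have h1 : ∑ j ∈ range (m + 1), (p : ℚ) ^ (0 + j) * (-1) ^ (0 + 2 * j)
        = ∑ j ∈ range (m + 1), (p : ℚ) ^ j := by
      refine Finset.sum_congr rfl fun j _ => ?_
      simp only [zero_add, pow_mul, neg_one_sq, one_pow, mul_one, one_mul]
    have h2 : ∑ j ∈ range m, (p : ℚ) ^ (1 + j) * (-1) ^ (1 + 2 * j)
        = -∑ j ∈ range m, (p : ℚ) ^ (1 + j) := by
      rw [← Finset.sum_neg_distrib]
      refine Finset.sum_congr rfl fun j _ => ?_
      simp only [pow_add, pow_mul, neg_one_sq, one_pow, pow_zero, pow_one, mul_one, one_mul]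
      ring
    have h3 : ∑ j ∈ range (m + 1), (p : ℚ) ^ (m - j) * (-1) ^ (β₃ + 2 + 0 + 2 * j)
        = (-1 : ℚ) ^ β₃ * ∑ j ∈ range (m + 1), (p : ℚ) ^ (m - j) := by
      rw [Finset.mul_sum]
      refine Finset.sum_congr rfl fun j _ => ?_
      simp only [pow_add, pow_mul, neg_one_sq, one_pow, pow_zero, pow_one, mul_one, one_mul]
      ring
    have h4 : ∑ j ∈ range m, (p : ℚ) ^ (m - j) * (-1) ^ (β₃ + 2 + 1 + 2 * j)
        = -((-1 : ℚ) ^ β₃ * ∑ j ∈ range m, (p : ℚ) ^ (m - j)) := by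
      rw [Finset.mul_sum, ← Finset.sum_neg_distrib]
      refine Finset.sum_congr rfl fun j _ => ?_
      simp only [pow_add, pow_mul, neg_one_sq, one_pow, pow_zero, pow_one, mul_one, one_mul]
      ring
    have h5 : (∑ j ∈ range (β₃ - (2 * m + 1) + 1), (-1 : ℚ) ^ j * (-1) ^ (2 * m + 1 + 0 + j)
        + ∑ j ∈ range (β₃ - (2 * m + 1) + 1), (-1 : ℚ) ^ j * (-1) ^ (2 * m + 1 + 1 + j)) = 0 := by
      rw [← Finset.sum_add_distrib]
      refine Finset.sum_eq_zero fun j _ => ?_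
      simp only [pow_add, pow_mul, neg_one_sq, one_pow, pow_zero, pow_one, mul_one, one_mul]
      ring
    have hE : (-1 : ℚ) ^ (β₃ + 1) *
        ((-1 : ℚ) ^ β₃ * (∑ j ∈ range (m + 1), (p : ℚ) ^ (m - j))
          + -((-1 : ℚ) ^ β₃ * ∑ j ∈ range m, (p : ℚ) ^ (m - j)))
        = -((∑ j ∈ range (m + 1), (p : ℚ) ^ (m - j)) - ∑ j ∈ range m, (p : ℚ) ^ (m - j)) := by
      rw [pow_succ]
      linear_combination ((∑ j ∈ range m, (p : ℚ) ^ (m - j)) - ∑ j ∈ range (m + 1), (p : ℚ) ^ (m - j)) * he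
    rw [h1, h2, h3, h4, h5, mul_zero, add_zero, hE, lemE2, geom_aux]
    ring
  · simp only [derivative_add, derivative_mul, derivative_C, zero_mul, zero_add,
      eval_add, eval_mul, eval_C, dev_sum]
    have h1 : ∑ j ∈ range (m + 1), -((p : ℚ) ^ j * ((2 * j : ℕ) : ℚ) * (-1) ^ (2 * j))
        = -∑ j ∈ range (m + 1), 2 * (j : ℚ) * (p : ℚ) ^ j := by
      rw [← Finset.sum_neg_distrib]
      refine Finset.sum_congr rfl fun j _ => ?_
      push_cast
      simp only [zero_add, pow_mul, neg_one_sq, one_pow, mul_one, one_mul]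
      ring
    have h2 : ∑ j ∈ range m, -((p : ℚ) ^ (1 + j) * ((1 + 2 * j : ℕ) : ℚ) * (-1) ^ (1 + 2 * j))
        = ∑ j ∈ range m, (1 + 2 * (j : ℚ)) * (p : ℚ) ^ (1 + j) := by
      refine Finset.sum_congr rfl fun j _ => ?_
      push_cast
      simp only [pow_add, pow_mul, neg_one_sq, one_pow, pow_zero, pow_one, mul_one, one_mul]
      ring
    have h3 : ∑ j ∈ range (m + 1), -((p : ℚ) ^ (m - j) * ((β₃ + 2 + 0 + 2 * j : ℕ) : ℚ) * (-1) ^ (β₃ + 2 + 0 + 2 * j))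
        = -((-1 : ℚ) ^ β₃ * ∑ j ∈ range (m + 1), (p : ℚ) ^ (m - j) * (((β₃ : ℚ) + 2) + 2 * (j : ℚ))) := by
      rw [Finset.mul_sum, ← Finset.sum_neg_distrib]
      refine Finset.sum_congr rfl fun j _ => ?_
      push_cast
      simp only [pow_add, pow_mul, neg_one_sq, one_pow, pow_zero, pow_one, mul_one, one_mul]
      ring
    have h4 : ∑ j ∈ range m, -((p : ℚ) ^ (m - j) * ((β₃ + 2 + 1 + 2 * j : ℕ) : ℚ) * (-1) ^ (β₃ + 2 + 1 + 2 * j))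
        = (-1 : ℚ) ^ β₃ * ∑ j ∈ range m, (p : ℚ) ^ (m - j) * (((β₃ : ℚ) + 2) + 1 + 2 * (j : ℚ)) := by
      rw [Finset.mul_sum]
      refine Finset.sum_congr rfl fun j _ => ?_
      push_cast
      simp only [pow_add, pow_mul, neg_one_sq, one_pow, pow_zero, pow_one, mul_one, one_mul]
      ring
    have h5 : (∑ j ∈ range (β₃ - (2 * m + 1) + 1), -((-1 : ℚ) ^ j * ((2 * m + 1 + 0 + j : ℕ) : ℚ) * (-1) ^ (2 * m + 1 + 0 + j))
        + ∑ j ∈ range (β₃ - (2 * m + 1) + 1), -((-1 : ℚ) ^ j * ((2 * m + 1 + 1 + j : ℕ) : ℚ) * (-1) ^ (2 * m + 1 + 1 + j)))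
        = -((β₃ - (2 * m + 1) + 1 : ℕ) : ℚ) := by
      rw [← Finset.sum_add_distrib]
      rw [show -((β₃ - (2 * m + 1) + 1 : ℕ) : ℚ) = ∑ _j ∈ range (β₃ - (2 * m + 1) + 1), (-1 : ℚ) by
        rw [Finset.sum_const, Finset.card_range]; simp]
      refine Finset.sum_congr rfl fun j _ => ?_
      push_cast
      have hj : (-1 : ℚ) ^ j * (-1) ^ j = 1 := by
        rw [← pow_add]; exact Even.neg_one_pow ⟨j, rfl⟩
      simp only [pow_add, pow_mul, neg_one_sq, one_pow, pow_zero, pow_one, mul_one, one_mul]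
      linear_combination (-1 : ℚ) * hj
    have hE : (-1 : ℚ) ^ (β₃ + 1) *
        (-((-1 : ℚ) ^ β₃ * ∑ j ∈ range (m + 1), (p : ℚ) ^ (m - j) * (((β₃ : ℚ) + 2) + 2 * (j : ℚ)))
          + (-1 : ℚ) ^ β₃ * ∑ j ∈ range m, (p : ℚ) ^ (m - j) * (((β₃ : ℚ) + 2) + 1 + 2 * (j : ℚ)))
        = (∑ j ∈ range (m + 1), (p : ℚ) ^ (m - j) * (((β₃ : ℚ) + 2) + 2 * (j : ℚ)))
          - ∑ j ∈ range m, (p : ℚ) ^ (m - j) * (((β₃ : ℚ) + 2) + 1 + 2 * (j : ℚ)) := by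
      rw [pow_succ]
      linear_combination ((∑ j ∈ range (m + 1), (p : ℚ) ^ (m - j) * (((β₃ : ℚ) + 2) + 2 * (j : ℚ)))
        - ∑ j ∈ range m, (p : ℚ) ^ (m - j) * (((β₃ : ℚ) + 2) + 1 + 2 * (j : ℚ))) * he
    rw [h1, h2, h3, h4, h5, hE, hK]
    have hd1 := lemD1 (p : ℚ) m
    have hd2 := lemD2 (p : ℚ) m ((β₃ : ℚ) + 2)
    have hgeom : ∑ j ∈ range (m + 1), (p : ℚ) ^ j = ((p : ℚ) ^ (m + 1) - 1) / ((p : ℚ) - 1) :=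
      geom_sum_eq hq1 (m + 1)
    rw [hgeom] at hd1 hd2
    push_cast
    linear_combination hd1 + hd2
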